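/- Let E = (E,+,',0,1) be a lattice effect algebra, let → be its natural implication x→y := y+(x∨y)', and define from (E,→,0) a partial operation ⊕ by: x⊕y is defined iff x→(y→0) = 1, and in that case x⊕y := (x→0)→y; put x* := x→0 and e := 0→0. Then ⊕ = + (a⊕b is defined iff a+b is defined and they are then equal), x* = x' for all x, and e = 1. In other words, the lattice effect algebra recovered from the implication reduct of E equals E. -/
import Mathlib


/-- An effect algebra `(E,+,',0,1)`.  The partial addition is encoded by a total
function `add` together with a definedness predicate `D`; the axioms only
constrain `add` on defined pairs. -/
structure EffectAlgebra (E : Type*) where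
  /-- definedness predicate for the partial addition -/
  D : E → E → Prop
  /-- the (partial) addition -/
  add : E → E → E
  /-- the complementation `x ↦ x'` -/
  compl : E → E
  zero : E
  one : E
  /-- (E1) -/
  comm_def : ∀ {a b : E}, D a b → D b a
  comm : ∀ {a b : E}, D a b → add a b = add b a
  /-- (E2): `(a+b)+c` is defined iff `a+(b+c)` is defined -/
  assoc_def : ∀ a b c : E, (D a b ∧ D (add a b) c) ↔ (D b c ∧ D a (add b c))
  assoc : ∀ a b c : E, D a b → D (add a b) c → add (add a b) c = add a (add b c)
  /-- (E3): `a + b` is defined and equals `1` iff `b = a'` -/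
  orth : ∀ a b : E, (D a b ∧ add a b = one) ↔ b = compl a
  /-- (E4) -/
  one_add : ∀ a : E, D one a → a = zero

/-- The induced order of an effect algebra: `a ≤ b` iff `a + c = b` for some `c`. -/
def EffectAlgebra.le {E : Type*} (A : EffectAlgebra E) (a b : E) : Prop :=
  ∃ c, A.D a c ∧ A.add a c = b

/-- A lattice effect algebra: an effect algebra whose induced order is a lattice. -/
structure LatticeEffectAlgebra (E : Type*) extends EffectAlgebra E where
  sup : E → E → E
  inf : E → E → E
  le_sup_left : ∀ a b : E, toEffectAlgebra.le a (sup a b)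
  le_sup_right : ∀ a b : E, toEffectAlgebra.le b (sup a b)
  sup_le : ∀ a b c : E, toEffectAlgebra.le a c → toEffectAlgebra.le b c →
    toEffectAlgebra.le (sup a b) c
  inf_le_left : ∀ a b : E, toEffectAlgebra.le (inf a b) a
  inf_le_right : ∀ a b : E, toEffectAlgebra.le (inf a b) b
  le_inf : ∀ a b c : E, toEffectAlgebra.le c a → toEffectAlgebra.le c b →
    toEffectAlgebra.le c (inf a b)

/-- The natural implication `x → y := y + (x ∨ y)'` of a lattice effect algebra.
(The sum is always defined since `(x ∨ y)' ≤ y'`.) -/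
def LatticeEffectAlgebra.imp {E : Type*} (L : LatticeEffectAlgebra E) (x y : E) : E :=
  L.add y (L.compl (L.sup x y))

namespace EffectAlgebra

variable {E : Type*} (A : EffectAlgebra E)

theorem D_compl (a : E) : A.D a (A.compl a) := ((A.orth a (A.compl a)).2 rfl).1

theorem add_compl (a : E) : A.add a (A.compl a) = A.one := ((A.orth a (A.compl a)).2 rfl).2

theorem compl_one : A.compl A.one = A.zero := A.one_add _ (A.D_compl A.one)

theorem D_one_zero : A.D A.one A.zero := by
  have h := A.D_compl A.one; rwa [A.compl_one] at h

theorem add_one_zero : A.add A.one A.zero = A.one := by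
  have h := A.add_compl A.one; rwa [A.compl_one] at h

theorem D_zero_one : A.D A.zero A.one := A.comm_def A.D_one_zero

theorem add_zero_one : A.add A.zero A.one = A.one := by
  rw [A.comm A.D_zero_one]; exact A.add_one_zero

theorem compl_zero : A.compl A.zero = A.one :=
  ((A.orth A.zero A.one).1 ⟨A.D_zero_one, A.add_zero_one⟩).symm

theorem compl_compl (a : E) : A.compl (A.compl a) = a := by
  have h1 : A.D (A.compl a) a := A.comm_def (A.D_compl a)
  have h2 : A.add (A.compl a) a = A.one := by
    rw [A.comm h1]; exact A.add_compl a
  exact ((A.orth (A.compl a) a).1 ⟨h1, h2⟩).symm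

theorem compl_inj {a b : E} (h : A.compl a = A.compl b) : a = b := by
  rw [← A.compl_compl a, h, A.compl_compl]

theorem D_zero (a : E) : A.D A.zero a :=
  ((A.assoc_def A.zero a (A.compl a)).2
    ⟨A.D_compl a, by rw [A.add_compl]; exact A.D_zero_one⟩).1

theorem zero_add (a : E) : A.add A.zero a = a := by
  have h := (A.assoc_def A.zero a (A.compl a)).2
    ⟨A.D_compl a, by rw [A.add_compl]; exact A.D_zero_one⟩
  have h2 : A.add (A.add A.zero a) (A.compl a) = A.one := by
    rw [A.assoc _ _ _ h.1 h.2, A.add_compl, A.add_zero_one]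
  have h3 := (A.orth (A.add A.zero a) (A.compl a)).1 ⟨h.2, h2⟩
  exact (A.compl_inj h3).symm

theorem add_zero (a : E) : A.add a A.zero = a := by
  rw [A.comm (A.comm_def (A.D_zero a))]; exact A.zero_add a

theorem le_refl (a : E) : A.le a a := ⟨A.zero, A.comm_def (A.D_zero a), A.add_zero a⟩

theorem zero_le (a : E) : A.le A.zero a := ⟨a, A.D_zero a, A.zero_add a⟩

/-- From a defined sum, subtract: `b + (a+b)' = a'` (with definedness). -/
theorem helper1 {a b : E} (hab : A.D a b) :
    A.D b (A.compl (A.add a b)) ∧ A.add b (A.compl (A.add a b)) = A.compl a := by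
  have hs : A.D (A.add a b) (A.compl (A.add a b)) := A.D_compl _
  have h := (A.assoc_def a b (A.compl (A.add a b))).1 ⟨hab, hs⟩
  refine ⟨h.1, ?_⟩
  have h2 : A.add a (A.add b (A.compl (A.add a b))) = A.one := by
    rw [← A.assoc a b _ hab hs, A.add_compl]
  exact (A.orth a _).1 ⟨h.2, h2⟩

theorem cancel {a b c : E} (hab : A.D a b) (hac : A.D a c)
    (h : A.add a b = A.add a c) : b = c := by
  obtain ⟨h1, e1⟩ := A.helper1 hab
  obtain ⟨h2, e2⟩ := A.helper1 hac
  obtain ⟨h3, e3⟩ := A.helper1 h1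
  obtain ⟨h4, e4⟩ := A.helper1 h2
  rw [e1, A.compl_compl] at e3
  rw [e2, A.compl_compl] at e4
  exact A.compl_inj (e3.symm.trans (by rw [h]; exact e4))

theorem add_eq_zero_left {a b : E} (hD : A.D a b) (h : A.add a b = A.zero) :
    a = A.zero := by
  have hDb : A.D (A.add a b) A.one := by rw [h]; exact A.D_zero_one
  have h2 := (A.assoc_def a b A.one).1 ⟨hD, hDb⟩
  have hb : b = A.zero := A.one_add b (A.comm_def h2.1)
  rw [hb, A.add_zero] at h; exact h

theorem le_antisymm {a b : E} (h1 : A.le a b) (h2 : A.le b a) : a = b := by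
  obtain ⟨c, hc, hc2⟩ := h1
  obtain ⟨d, hd, hd2⟩ := h2
  have hDb : A.D (A.add a c) d := by rw [hc2]; exact hd
  have h3 := (A.assoc_def a c d).1 ⟨hc, hDb⟩
  have h4 : A.add a (A.add c d) = A.add a A.zero := by
    rw [← A.assoc a c d hc hDb, hc2, hd2, A.add_zero]
  have h5 : A.add c d = A.zero := A.cancel h3.2 (A.comm_def (A.D_zero a)) h4
  have hc0 : c = A.zero := A.add_eq_zero_left h3.1 h5
  rw [← hc2, hc0, A.add_zero]

theorem D_iff_le_compl {a b : E} : A.D a b ↔ A.le a (A.compl b) := by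
  constructor
  · intro h
    obtain ⟨h1, e1⟩ := A.helper1 (A.comm_def h)
    exact ⟨_, h1, e1⟩
  · rintro ⟨c, hc, hce⟩
    have hDb : A.D (A.add a c) b := by rw [hce]; exact A.comm_def (A.D_compl b)
    have h2 := (A.assoc_def a c b).1 ⟨hc, hDb⟩
    have h3 : A.D a (A.add b c) := by rw [← A.comm h2.1]; exact h2.2
    exact ((A.assoc_def a b c).2 ⟨A.comm_def h2.1, h3⟩).1

end EffectAlgebra

namespace LatticeEffectAlgebra

variable {E : Type*} (L : LatticeEffectAlgebra E)

theorem sup_eq_right {a b : E} (h : L.toEffectAlgebra.le a b) : L.sup a b = b :=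
  L.toEffectAlgebra.le_antisymm
    (L.sup_le a b b h (L.toEffectAlgebra.le_refl b)) (L.le_sup_right a b)

theorem imp_zero (a : E) : L.imp a L.zero = L.compl a := by
  have hs : L.sup a L.zero = a :=
    L.toEffectAlgebra.le_antisymm
      (L.sup_le a L.zero a (L.toEffectAlgebra.le_refl a) (L.toEffectAlgebra.zero_le a))
      (L.le_sup_left a L.zero)
  show L.add L.zero (L.compl (L.sup a L.zero)) = L.compl a
  rw [hs, L.toEffectAlgebra.zero_add]

theorem imp_compl_eq_one_iff (a b : E) :
    L.imp a (L.compl b) = L.one ↔ L.D a b := by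
  have hD : L.D (L.compl b) (L.compl (L.sup a (L.compl b))) := by
    rw [L.toEffectAlgebra.D_iff_le_compl, L.toEffectAlgebra.compl_compl]
    exact L.le_sup_right a (L.compl b)
  constructor
  · intro h
    have h2 := (L.toEffectAlgebra.orth (L.compl b) (L.compl (L.sup a (L.compl b)))).1 ⟨hD, h⟩
    have h3 : L.sup a (L.compl b) = L.compl b := L.toEffectAlgebra.compl_inj h2
    have h4 : L.toEffectAlgebra.le a (L.compl b) := by
      rw [← h3]; exact L.le_sup_left a (L.compl b)
    exact L.toEffectAlgebra.D_iff_le_compl.2 h4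
  · intro h
    have h4 : L.toEffectAlgebra.le a (L.compl b) := L.toEffectAlgebra.D_iff_le_compl.1 h
    have h3 : L.sup a (L.compl b) = L.compl b := L.sup_eq_right h4
    show L.add (L.compl b) (L.compl (L.sup a (L.compl b))) = L.one
    rw [h3, L.toEffectAlgebra.add_compl]

end LatticeEffectAlgebra

/-- Theorem 2.6, first half: reconstructing the partial operation from the natural
implication recovers the original lattice effect algebra, i.e. `a ⊕ b`
(defined iff `a → (b → 0) = 1`, with value `(a → 0) → b`) coincides with `a + b`,
`a* = a → 0 = a'`, and `e = 0 → 0 = 1`. -/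
theorem effectAlgebra_from_imp_reduct_eq_self {E : Type*} (L : LatticeEffectAlgebra E) :
    (∀ a b : E,
      (L.imp a (L.imp b L.zero) = L.one ↔ L.D a b) ∧
      (L.D a b → L.imp (L.imp a L.zero) b = L.add a b)) ∧
    (∀ a : E, L.imp a L.zero = L.compl a) ∧
    L.imp L.zero L.zero = L.one := by
  refine ⟨fun a b => ⟨?_, ?_⟩, fun a => L.imp_zero a, by rw [L.imp_zero, L.toEffectAlgebra.compl_zero]⟩
  · rw [L.imp_zero b]
    exact L.imp_compl_eq_one_iff a b
  · intro hab
    rw [L.imp_zero a]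
    have hba : L.D b a := L.toEffectAlgebra.comm_def hab
    have hle : L.toEffectAlgebra.le b (L.compl a) := L.toEffectAlgebra.D_iff_le_compl.1 hba
    have hs : L.sup (L.compl a) b = L.compl a :=
      L.toEffectAlgebra.le_antisymm
        (L.sup_le (L.compl a) b (L.compl a) (L.toEffectAlgebra.le_refl _) hle)
        (L.le_sup_left _ _)
    show L.add b (L.compl (L.sup (L.compl a) b)) = L.add a b
    rw [hs, L.toEffectAlgebra.compl_compl, L.toEffectAlgebra.comm hba]
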